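/- For every positive integer m, s(m) = min{ n : g(n) ≥ m }. -/

import Mathlib

/-- `I` is a maximal independent set (MIS) of `G`: it is independent, and it is not
properly contained in any other independent set. -/
def IsMaxIndepSet {V : Type*} (G : SimpleGraph V) (I : Set V) : Prop :=
  (∀ x ∈ I, ∀ y ∈ I, ¬ G.Adj x y) ∧
  ∀ J : Set V, (∀ x ∈ J, ∀ y ∈ J, ¬ G.Adj x y) → I ⊆ J → J = I

/-- The number of maximal independent sets of `G`. -/
noncomputable def misCount {V : Type*} (G : SimpleGraph V) : ℕ :=
  Nat.card {I : Set V // IsMaxIndepSet G I}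

/-- `maxMis n` is the maximum number of maximal independent sets among all simple graphs
on `n` vertices. -/
noncomputable def maxMis (n : ℕ) : ℕ := sSup {k | ∃ G : SimpleGraph (Fin n), misCount G = k}

/-- A family `F` of `k` subsets of the ground set `Fin m` is a separating cover if the
sets cover the ground set and for every pair of distinct elements `x, y` there are
disjoint sets in the family with `x` in one and `y` in the other. -/
def IsSepCover {m k : ℕ} (F : Fin k → Set (Fin m)) : Prop :=
  (∀ x : Fin m, ∃ i, x ∈ F i) ∧
  ∀ x y : Fin m, x ≠ y → ∃ i j, x ∈ F i ∧ y ∈ F j ∧ Disjoint (F i) (F j)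

/-- `sepNum m` is the minimum number of sets in a separating cover on an `m`-element ground set. -/
noncomputable def sepNum (m : ℕ) : ℕ := sInf {k | ∃ F : Fin k → Set (Fin m), IsSepCover F}

lemma exists_maxIndep_superset {V : Type*} (G : SimpleGraph V) (S : Set V)
    (hS : ∀ x ∈ S, ∀ y ∈ S, ¬ G.Adj x y) :
    ∃ M, S ⊆ M ∧ IsMaxIndepSet G M := by
  obtain ⟨M, hSM, hMax⟩ := zorn_subset_nonempty {I : Set V | ∀ x ∈ I, ∀ y ∈ I, ¬ G.Adj x y}
    (fun c hc hchain _ => ⟨⋃₀ c, by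
      intro x hx y hy
      obtain ⟨A, hA, hxA⟩ := hx
      obtain ⟨B, hB, hyB⟩ := hy
      rcases hchain.total hA hB with h | h
      · exact hc hB x (h hxA) y hyB
      · exact hc hA x hxA y (h hyB), fun s hs => Set.subset_sUnion_of_mem hs⟩) S hS
  refine ⟨M, hSM, hMax.1, fun J hJ hMJ => ?_⟩
  exact (hMax.2 hJ hMJ).antisymm hMJ

lemma mis_nonempty {V : Type*} [Nonempty V] {G : SimpleGraph V} {I : Set V}
    (hI : IsMaxIndepSet G I) : I.Nonempty := by
  by_contra h
  rw [Set.not_nonempty_iff_eq_empty] at h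
  obtain ⟨v⟩ := ‹Nonempty V›
  have := hI.2 {v} (fun x hx y hy => by
    rw [Set.mem_singleton_iff] at hx hy; subst hx; subst hy; exact G.loopless.irrefl _) (by simp [h])
  simp [h] at this

lemma mis_cross_adj {V : Type*} {G : SimpleGraph V} {I J : Set V}
    (hI : IsMaxIndepSet G I) (hJ : IsMaxIndepSet G J) (hne : I ≠ J) :
    ∃ u ∈ I, ∃ w ∈ J, G.Adj u w := by
  have hns : ¬ I ⊆ J := fun h => hne ((hI.2 J hJ.1 h).symm)
  obtain ⟨u, huI, huJ⟩ := Set.not_subset.mp hns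
  by_contra hcon
  push_neg at hcon
  have hind : ∀ x ∈ J ∪ {u}, ∀ y ∈ J ∪ {u}, ¬ G.Adj x y := by
    intro x hx y hy hadj
    rcases hx with hx | hx <;> rcases hy with hy | hy
    · exact hJ.1 x hx y hy hadj
    · rw [Set.mem_singleton_iff] at hy; subst hy; exact hcon y huI x hx hadj.symm
    · rw [Set.mem_singleton_iff] at hx; subst hx; exact hcon x huI y hy hadj
    · rw [Set.mem_singleton_iff] at hx hy; subst hx; subst hy; exact G.loopless.irrefl _ hadj
  have := hJ.2 (J ∪ {u}) hind Set.subset_union_left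
  exact huJ (this ▸ Set.mem_union_right J rfl : u ∈ J)

lemma misCount_le {n : ℕ} (G : SimpleGraph (Fin n)) : misCount G ≤ Nat.card (Set (Fin n)) :=
  Nat.card_le_card_of_injective _ Subtype.val_injective

lemma bdd (n : ℕ) : BddAbove {k | ∃ G : SimpleGraph (Fin n), misCount G = k} :=
  ⟨Nat.card (Set (Fin n)), by rintro k ⟨G, rfl⟩; exact misCount_le G⟩

lemma le_maxMis {n : ℕ} (G : SimpleGraph (Fin n)) : misCount G ≤ maxMis n :=
  le_csSup (bdd n) ⟨G, rfl⟩

lemma maxMis_attained (n : ℕ) : ∃ G : SimpleGraph (Fin n), misCount G = maxMis n := by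
  have h : maxMis n ∈ {k | ∃ G : SimpleGraph (Fin n), misCount G = k} :=
    Nat.sSup_mem ⟨misCount ⊥, ⟨⊥, rfl⟩⟩ (bdd n)
  exact h

-- direction 1: sep cover with n sets over m ≥ 1 elements gives graph with ≥ m MISes
lemma sepCover_to_graph {m n : ℕ} (hm : 1 ≤ m) (F : Fin n → Set (Fin m))
    (hF : IsSepCover F) : 1 ≤ n ∧ m ≤ maxMis n := by
  have hmne : Nonempty (Fin m) := ⟨⟨0, hm⟩⟩
  obtain ⟨x0⟩ := hmne
  obtain ⟨i0, _⟩ := hF.1 x0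
  refine ⟨i0.pos, ?_⟩
  set G : SimpleGraph (Fin n) :=
    { Adj := fun i j => i ≠ j ∧ Disjoint (F i) (F j)
      symm := ⟨fun i j h => ⟨h.1.symm, h.2.symm⟩⟩
      loopless := ⟨fun i h => h.1 rfl⟩ } with hG
  have hSind : ∀ x : Fin m, ∀ a ∈ {i | x ∈ F i}, ∀ b ∈ {i | x ∈ F i}, ¬ G.Adj a b := by
    intro x a ha b hb hadj
    exact Set.disjoint_left.mp hadj.2 ha hb
  choose M hSM hM using fun x : Fin m => exists_maxIndep_superset G {i | x ∈ F i} (hSind x)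
  have hinj : Function.Injective M := by
    intro x y hxy
    by_contra hne
    obtain ⟨i, j, hxi, hyj, hdisj⟩ := hF.2 x y hne
    have hij : i ≠ j := by rintro rfl; exact Set.disjoint_left.mp hdisj hxi hxi
    have hiM : i ∈ M x := hSM x hxi
    have hjM : j ∈ M y := hSM y hyj
    rw [hxy] at hiM
    exact (hM y).1 i hiM j hjM ⟨hij, hdisj⟩
  have : m ≤ misCount G := by
    have := Nat.card_le_card_of_injective
      (fun x : Fin m => (⟨M x, hM x⟩ : {I : Set (Fin n) // IsMaxIndepSet G I}))
      (fun a b h => hinj (congrArg Subtype.val h))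
    simpa [misCount] using this
  exact this.trans (le_maxMis G)

-- direction 2
lemma graph_to_sepCover {m n : ℕ} (hn : 1 ≤ n) (hmn : m ≤ maxMis n) :
    ∃ F : Fin n → Set (Fin m), IsSepCover F := by
  obtain ⟨G, hG⟩ := maxMis_attained n
  have hcard : m ≤ Nat.card {I : Set (Fin n) // IsMaxIndepSet G I} := by
    rw [show Nat.card {I : Set (Fin n) // IsMaxIndepSet G I} = misCount G from rfl, hG]
    exact hmn
  have : Nonempty (Fin n) := ⟨⟨0, hn⟩⟩
  let e := Finite.equivFin {I : Set (Fin n) // IsMaxIndepSet G I}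
  let f : Fin m → {I : Set (Fin n) // IsMaxIndepSet G I} :=
    fun x => e.symm (Fin.castLE hcard x)
  have hfinj : Function.Injective f :=
    e.symm.injective.comp (Fin.castLE_injective hcard)
  let M : Fin m → Set (Fin n) := fun x => (f x).1
  have hM : ∀ x, IsMaxIndepSet G (M x) := fun x => (f x).2
  have hMinj : Function.Injective M := fun a b h => hfinj (Subtype.ext h)
  refine ⟨fun v => {x | v ∈ M x}, ?_, ?_⟩
  · intro x
    obtain ⟨v, hv⟩ := mis_nonempty (hM x)
    exact ⟨v, hv⟩
  · intro x y hxy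
    obtain ⟨u, hu, w, hw, hadj⟩ := mis_cross_adj (hM x) (hM y) (fun h => hxy (hMinj h))
    refine ⟨u, w, hu, hw, Set.disjoint_left.mpr ?_⟩
    intro z hz1 hz2
    exact (hM z).1 u hz1 w hz2 hadj

/-- `sepNum m = min { n : maxMis n ≥ m }` (minimum over positive integers `n`). -/
theorem sepNum_eq_sInf :
    ∀ m : ℕ, 1 ≤ m → sepNum m = sInf {n : ℕ | 1 ≤ n ∧ m ≤ maxMis n} := by
  intro m hm
  have hS : (sepNum m) ∈ {k | ∃ F : Fin k → Set (Fin m), IsSepCover F} := by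
    apply Nat.sInf_mem
    refine ⟨m, fun x => {x}, fun x => ⟨x, rfl⟩, ?_⟩
    intro x y hxy
    exact ⟨x, y, rfl, rfl, Set.disjoint_singleton.mpr hxy⟩
  obtain ⟨F, hF⟩ := hS
  have h1 : sepNum m ∈ {n : ℕ | 1 ≤ n ∧ m ≤ maxMis n} := sepCover_to_graph hm F hF
  have h2 : sInf {n : ℕ | 1 ≤ n ∧ m ≤ maxMis n} ∈ {n : ℕ | 1 ≤ n ∧ m ≤ maxMis n} :=
    Nat.sInf_mem ⟨sepNum m, h1⟩
  refine le_antisymm ?_ (Nat.sInf_le h1)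
  obtain ⟨F', hF'⟩ := graph_to_sepCover h2.1 h2.2
  exact Nat.sInf_le ⟨F', hF'⟩
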